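/- Let γ be Euclidean gamma matrices with charge-conjugation matrix C, and let ξ : Fin 4 → R be a Grassmann-even Majorana spinor over a ℂ-algebra R. Then for all μ, ν, ρ: ξ̄(γ5γ_μγ_νγ_ρ)ξ = Σ_σ ε_{μνρσ}·ξ̄γ_σξ, where ε is the totally antisymmetric symbol with ε_{0123} = -1. -/

import Mathlib

open Matrix Complex BigOperators

noncomputable section

abbrev M4 : Type := Matrix (Fin 4) (Fin 4) ℂ

/-- Euclidean Clifford relation: γ_μγ_ν + γ_νγ_μ = 2δ_{μν}·1. -/
def CliffordRel (γ : Fin 4 → M4) : Prop :=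
  ∀ μ ν, γ μ * γ ν + γ ν * γ μ = if μ = ν then (2 : ℂ) • (1 : M4) else 0

/-- γ5 := -(γ_0 γ_1 γ_2 γ_3). -/
def gamma5 (γ : Fin 4 → M4) : M4 := -(γ 0 * γ 1 * γ 2 * γ 3)

/-- σ_{μν} := (γ_μγ_ν - γ_νγ_μ)/2 = [γ_μ, γ_ν]/2. -/
def sigmaMat (γ : Fin 4 → M4) (μ ν : Fin 4) : M4 :=
  (2⁻¹ : ℂ) • (γ μ * γ ν - γ ν * γ μ)

/-- Charge-conjugation matrix: invertible, Cᵀ = -C, C⁻¹γ_μC = -(γ_μ)ᵀ. -/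
def ChargeConj (γ : Fin 4 → M4) (C : M4) : Prop :=
  IsUnit C.det ∧ Cᵀ = -C ∧ ∀ μ, C⁻¹ * γ μ * C = -(γ μ)ᵀ

/-- Majorana conjugate row vector: ξ̄_β := -Σ_α ξ_α·(C⁻¹)_{αβ}. -/
def MajBar {R : Type*} [Ring R] [Algebra ℂ R] (C : M4) (ξ : Fin 4 → R) (β : Fin 4) : R :=
  -∑ α, (C⁻¹ α β) • ξ α

/-- Spinor bilinear: ξ̄Mχ := Σ_{β,γ'} ξ̄_β·M_{βγ'}·χ_{γ'} (complex entries act by scalar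
multiplication). -/
def bilin {R : Type*} [Ring R] [Algebra ℂ R] (C : M4) (M : M4) (ξ χ : Fin 4 → R) : R :=
  ∑ β, ∑ g, M β g • (MajBar C ξ β * χ g)

/-- Totally antisymmetric symbol with ε_{0123} = -1: minus the determinant of the
permutation-like matrix with rows e_μ, e_ν, e_ρ, e_σ. -/
def eps (μ ν ρ σ : Fin 4) : ℂ :=
  -Matrix.det (Matrix.of fun i j => if ![μ, ν, ρ, σ] i = j then (1 : ℂ) else 0)

/-!
For commuting components the bilinear form `ξ̄Mξ` only sees the part of `M` that is odd under the
anti-automorphism `M ↦ C Mᵀ C⁻¹`, which sends every `γ_μ` to `-γ_μ` and fixes `γ5`. The odd part of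
`γ5 γ_μ γ_ν γ_ρ` is `(γ5 γ_μ γ_ν γ_ρ + γ_ρ γ_ν γ_μ γ5) / 2`, and the Clifford relations reduce this
to `Σ_σ ε_{μνρσ} γ_σ`.
-/

open Finset

/-- The numerator is `∏_{i<j} (x_j - x_i)` for `x = (μ, ν, ρ, σ)`: it vanishes on repeated indices
and equals `12 = ∏_{i<j} (j - i)` times the sign of the permutation otherwise. -/
theorem eps_eq_vandermonde (μ ν ρ σ : Fin 4) :
    eps μ ν ρ σ = -(((ν : ℂ) - μ) * ((ρ : ℂ) - μ) * ((σ : ℂ) - μ) * ((ρ : ℂ) - ν) *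
      ((σ : ℂ) - ν) * ((σ : ℂ) - ρ)) / 12 := by
  have hint : ∀ μ ν ρ σ : Fin 4,
      -(of fun i j => if ![μ, ν, ρ, σ] i = j then (1 : ℤ) else 0).det * 12 =
        -(((ν : ℤ) - μ) * ((ρ : ℤ) - μ) * ((σ : ℤ) - μ) * ((ρ : ℤ) - ν) *
          ((σ : ℤ) - ν) * ((σ : ℤ) - ρ)) := by
    intro μ ν ρ σ
    simp only [det_succ_row_zero, Fin.sum_univ_succ, det_unique, Fin.sum_univ_zero,
      submatrix_apply, of_apply]
    revert μ ν ρ σ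
    decide
  have hcast : eps μ ν ρ σ =
      ((-(of fun i j => if ![μ, ν, ρ, σ] i = j then (1 : ℤ) else 0).det : ℤ) : ℂ) := by
    rw [eps, Int.cast_neg, Int.cast_det]
    congr 3
    ext i j
    simp [apply_ite]
  rw [hcast, eq_div_iff (by norm_num)]
  exact_mod_cast hint μ ν ρ σ

namespace CliffordRel

variable {γ : Fin 4 → M4}

theorem mul_self (hcl : CliffordRel γ) (μ : Fin 4) : γ μ * γ μ = 1 := by
  have h := hcl μ μ
  rw [if_pos rfl, ← two_smul ℂ (γ μ * γ μ)] at h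
  exact smul_right_injective M4 two_ne_zero h

theorem mul_self_mul (hcl : CliffordRel γ) (μ : Fin 4) (X : M4) : γ μ * (γ μ * X) = X := by
  rw [← mul_assoc, hcl.mul_self, one_mul]

theorem anticomm (hcl : CliffordRel γ) {μ ν : Fin 4} (h : μ ≠ ν) :
    γ ν * γ μ = -(γ μ * γ ν) := by
  have h' := hcl ν μ
  rw [if_neg h.symm] at h'
  exact eq_neg_of_add_eq_zero_right (by rw [add_comm]; exact h')

-- With `μ < ν` as side condition, `simp (disch := decide)` normal-orders products of generators.
theorem anticomm_of_lt (hcl : CliffordRel γ) {μ ν : Fin 4} (h : μ < ν) :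
    γ ν * γ μ = -(γ μ * γ ν) :=
  hcl.anticomm h.ne

theorem anticomm_mul_of_lt (hcl : CliffordRel γ) {μ ν : Fin 4} (h : μ < ν) (X : M4) :
    γ ν * (γ μ * X) = -(γ μ * (γ ν * X)) := by
  rw [← mul_assoc, hcl.anticomm_of_lt h, neg_mul, mul_assoc]

theorem reverse_prod (hcl : CliffordRel γ) : γ 3 * γ 2 * γ 1 * γ 0 = γ 0 * γ 1 * γ 2 * γ 3 := by
  simp (disch := decide) only [mul_assoc, hcl.anticomm_of_lt, hcl.anticomm_mul_of_lt, mul_neg,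
    neg_mul, neg_neg]

theorem gamma5_mul_add_mul_gamma5 (hcl : CliffordRel γ) (μ ν ρ : Fin 4) :
    gamma5 γ * γ μ * γ ν * γ ρ + γ ρ * γ ν * γ μ * gamma5 γ =
      (2 : ℂ) • ∑ σ, eps μ ν ρ σ • γ σ := by
  have cases : ∀ i : Fin 4, i = 0 ∨ i = 1 ∨ i = 2 ∨ i = 3 := by decide
  rcases cases μ with rfl | rfl | rfl | rfl <;> rcases cases ν with rfl | rfl | rfl | rfl <;>
    rcases cases ρ with rfl | rfl | rfl | rfl <;>
  · simp (disch := decide) only [gamma5, mul_assoc, neg_mul, mul_neg, neg_neg, hcl.mul_self,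
      hcl.mul_self_mul, hcl.anticomm_of_lt, hcl.anticomm_mul_of_lt, one_mul, mul_one,
      Fin.sum_univ_four, eps_eq_vandermonde, Fin.isValue, Fin.val_zero, Fin.val_one, Fin.val_two]
    norm_num <;> module

end CliffordRel

def chargeTranspose (C M : M4) : M4 := C * Mᵀ * C⁻¹

theorem chargeTranspose_mul {C : M4} (hC : IsUnit C.det) (A B : M4) :
    chargeTranspose C (A * B) = chargeTranspose C B * chargeTranspose C A := by
  simp only [chargeTranspose, transpose_mul, mul_assoc, nonsing_inv_mul_cancel_left _ _ hC]

theorem chargeTranspose_neg (C M : M4) : chargeTranspose C (-M) = -chargeTranspose C M := by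
  simp [chargeTranspose]

namespace ChargeConj

variable {γ : Fin 4 → M4} {C : M4}

theorem chargeTranspose_gamma (hC : ChargeConj γ C) (μ : Fin 4) :
    chargeTranspose C (γ μ) = -γ μ := by
  rw [chargeTranspose, ← neg_neg (γ μ)ᵀ, ← hC.2.2 μ]
  simp only [mul_neg, neg_mul, mul_assoc, mul_nonsing_inv_cancel_left _ _ hC.1,
    mul_nonsing_inv _ hC.1, mul_one]

theorem chargeTranspose_gamma5 (hC : ChargeConj γ C) (hcl : CliffordRel γ) :
    chargeTranspose C (gamma5 γ) = gamma5 γ := by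
  simp only [gamma5, chargeTranspose_neg, chargeTranspose_mul hC.1, hC.chargeTranspose_gamma,
    neg_mul, mul_neg, neg_neg]
  simp only [← mul_assoc, hcl.reverse_prod]

end ChargeConj

section Majorana

variable {R : Type*} [Ring R] [Algebra ℂ R]

theorem bilin_add (C M N : M4) (ξ χ : Fin 4 → R) :
    bilin C (M + N) ξ χ = bilin C M ξ χ + bilin C N ξ χ := by
  simp only [bilin, Matrix.add_apply, add_smul, sum_add_distrib]

theorem bilin_smul (C M : M4) (c : ℂ) (ξ χ : Fin 4 → R) :
    bilin C (c • M) ξ χ = c • bilin C M ξ χ := by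
  simp only [bilin, Matrix.smul_apply, smul_eq_mul, mul_smul, smul_sum]

theorem bilin_neg (C M : M4) (ξ χ : Fin 4 → R) : bilin C (-M) ξ χ = -bilin C M ξ χ := by
  simpa using bilin_smul C M (-1) ξ χ

theorem bilin_sum {ι : Type*} (C : M4) (s : Finset ι) (M : ι → M4) (ξ χ : Fin 4 → R) :
    bilin C (∑ i ∈ s, M i) ξ χ = ∑ i ∈ s, bilin C (M i) ξ χ :=
  map_sum (IsLinearMap.mk' (fun M ↦ bilin C M ξ χ)
    ⟨fun M N ↦ bilin_add C M N ξ χ, fun c M ↦ bilin_smul C M c ξ χ⟩) M s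

theorem bilin_eq_neg_sum (C M : M4) (ξ χ : Fin 4 → R) :
    bilin C M ξ χ = -∑ α, ∑ β, (C⁻¹ * M) α β • (ξ α * χ β) := by
  simp only [bilin, MajBar, mul_apply, neg_mul, smul_neg, sum_neg_distrib, sum_mul, smul_sum,
    sum_smul, smul_mul_assoc, smul_smul]
  rw [sum_comm_cycle]
  refine congrArg _ (sum_congr rfl fun α _ ↦ ?_)
  rw [sum_comm]
  exact sum_congr rfl fun _ _ ↦ sum_congr rfl fun _ _ ↦ by rw [mul_comm]

theorem sum_transpose_smul_mul_self {ξ : Fin 4 → R} (heven : ∀ α β, ξ α * ξ β = ξ β * ξ α)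
    (N : M4) : ∑ α, ∑ β, Nᵀ α β • (ξ α * ξ β) = ∑ α, ∑ β, N α β • (ξ α * ξ β) := by
  rw [sum_comm]
  simp only [transpose_apply, heven]

theorem bilin_chargeTranspose_self {C : M4} (hdet : IsUnit C.det) (hT : Cᵀ = -C)
    {ξ : Fin 4 → R} (heven : ∀ α β, ξ α * ξ β = ξ β * ξ α) (M : M4) :
    bilin C (chargeTranspose C M) ξ ξ = -bilin C M ξ ξ := by
  have hinvT : C⁻¹ᵀ = -C⁻¹ := by
    rw [transpose_nonsing_inv, hT]
    exact inv_eq_left_inv (by rw [neg_mul_neg, nonsing_inv_mul _ hdet])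
  have hflip : C⁻¹ * chargeTranspose C M = -(C⁻¹ * M)ᵀ := by
    rw [chargeTranspose, mul_assoc, nonsing_inv_mul_cancel_left _ _ hdet, transpose_mul, hinvT,
      mul_neg, neg_neg]
  rw [bilin_eq_neg_sum, bilin_eq_neg_sum, hflip]
  simp only [Matrix.neg_apply, neg_smul, sum_neg_distrib, sum_transpose_smul_mul_self heven]

end Majorana

theorem statement6 {R : Type*} [Ring R] [Algebra ℂ R]
    (γ : Fin 4 → M4) (C : M4) (hcl : CliffordRel γ) (hC : ChargeConj γ C)
    (ξ : Fin 4 → R) (heven : ∀ α β, ξ α * ξ β = ξ β * ξ α) :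
    ∀ μ ν ρ, bilin C (gamma5 γ * γ μ * γ ν * γ ρ) ξ ξ =
      ∑ s : Fin 4, eps μ ν ρ s • bilin C (γ s) ξ ξ := by
  intro μ ν ρ
  set M := gamma5 γ * γ μ * γ ν * γ ρ
  have hflip : chargeTranspose C M = -(γ ρ * γ ν * γ μ * gamma5 γ) := by
    simp only [M, chargeTranspose_mul hC.1, hC.chargeTranspose_gamma,
      hC.chargeTranspose_gamma5 hcl, neg_mul, mul_neg, neg_neg, mul_assoc]
  refine smul_right_injective R (two_ne_zero (α := ℂ)) ?_
  calc (2 : ℂ) • bilin C M ξ ξ = bilin C M ξ ξ - bilin C (chargeTranspose C M) ξ ξ := by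
        rw [bilin_chargeTranspose_self hC.1 hC.2.1 heven, sub_neg_eq_add, two_smul]
    _ = bilin C (M + γ ρ * γ ν * γ μ * gamma5 γ) ξ ξ := by
        rw [hflip, bilin_neg, sub_neg_eq_add, bilin_add]
    _ = (2 : ℂ) • ∑ s, eps μ ν ρ s • bilin C (γ s) ξ ξ := by
        simp only [M, hcl.gamma5_mul_add_mul_gamma5, bilin_smul, bilin_sum]
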